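/- Let A ⊆ F_2^n, ε ∈ [0, 1/2), δ ∈ (0, 1/2), and suppose g : F_2^n → ℝ satisfies ‖1_A − g‖_∞ ≤ ε. If W is a subgroup such that Var[g | W + c] ≤ ((1−2ε)²δ)/4 for every c, then for every coset W + c, either E[1_A | W + c] ≤ δ or E[1_A | W + c] ≥ 1 − δ. -/
import Mathlib


open Finset
open scoped Classical

noncomputable def ind {n : ℕ} (A : Set (Fin n → ZMod 2)) : (Fin n → ZMod 2) → ℝ :=
  fun x => if x ∈ A then 1 else 0

/-- Average of `f` over the coset `W + c`. -/
noncomputable def cosetAvg {n : ℕ} (f : (Fin n → ZMod 2) → ℝ)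
    (W : Submodule (ZMod 2) (Fin n → ZMod 2)) (c : Fin n → ZMod 2) : ℝ :=
  (∑ x ∈ univ.filter (fun x : Fin n → ZMod 2 => x - c ∈ W), f x) /
    (univ.filter (fun x : Fin n → ZMod 2 => x - c ∈ W)).card

/-- Variance of `f` over the coset `W + c`. -/
noncomputable def cosetVar {n : ℕ} (f : (Fin n → ZMod 2) → ℝ)
    (W : Submodule (ZMod 2) (Fin n → ZMod 2)) (c : Fin n → ZMod 2) : ℝ :=
  cosetAvg (fun x => (f x - cosetAvg f W c) ^ 2) W c

theorem stmt12 {n : ℕ} (A : Set (Fin n → ZMod 2)) (ε δ : ℝ)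
    (hε0 : 0 ≤ ε) (hε : ε < 1 / 2) (hδ0 : 0 < δ) (hδ : δ < 1 / 2)
    (g : (Fin n → ZMod 2) → ℝ) (hg : ∀ x, |ind A x - g x| ≤ ε)
    (W : Submodule (ZMod 2) (Fin n → ZMod 2))
    (hvar : ∀ c, cosetVar g W c ≤ (1 - 2 * ε) ^ 2 * δ / 4) :
    ∀ c : Fin n → ZMod 2,
      cosetAvg (ind A) W c ≤ δ ∨ cosetAvg (ind A) W c ≥ 1 - δ := by
  intro c
  classical
  set S : Finset (Fin n → ZMod 2) := univ.filter (fun x => x - c ∈ W) with hSdef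
  have hcS : c ∈ S := by simp [hSdef]
  have hNpos : 0 < S.card := Finset.card_pos.mpr ⟨c, hcS⟩
  have hN : (0:ℝ) < (S.card : ℝ) := by exact_mod_cast hNpos
  set m := cosetAvg g W c with hm
  set q : ℝ := 1/2 - ε with hq
  have hqpos : 0 < q := by rw [hq]; linarith
  have hq2 : (1 - 2*ε)^2 * δ / 4 = q^2 * δ := by rw [hq]; ring
  have hvc : (∑ x ∈ S, (g x - m)^2) / (S.card : ℝ) ≤ q^2 * δ := by
    rw [← hq2]
    exact hvar c
  have havg : cosetAvg (ind A) W c = ((S.filter (fun x => x ∈ A)).card : ℝ) / S.card := by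
    unfold cosetAvg
    rw [← hSdef]
    congr 1
    simp [ind, Finset.sum_boole]
  set a : ℝ := ((S.filter (fun x => x ∈ A)).card : ℝ) with ha
  have hga : ∀ x ∈ A, 1 - ε ≤ g x := by
    intro x hx
    have := hg x
    rw [ind, if_pos hx] at this
    have := abs_le.mp this
    linarith [this.1, this.2]
  have hgna : ∀ x, x ∉ A → g x ≤ ε := by
    intro x hx
    have := hg x
    rw [ind, if_neg hx] at this
    have h := abs_le.mp this
    linarith [h.1, h.2]
  by_cases hmc : m ≤ 1/2
  · -- A-points have g x - m ≥ q
    left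
    have hsum : a * q^2 ≤ ∑ x ∈ S, (g x - m)^2 := by
      have h1 : ∀ x ∈ S.filter (fun x => x ∈ A), q^2 ≤ (g x - m)^2 := by
        intro x hx
        have hxA : x ∈ A := (Finset.mem_filter.mp hx).2
        have h := hga x hxA
        have : q ≤ g x - m := by rw [hq]; linarith
        exact pow_le_pow_left₀ hqpos.le this 2
      calc a * q^2 = (S.filter (fun x => x ∈ A)).card • q^2 := by
              rw [nsmul_eq_mul, ha]
        _ ≤ ∑ x ∈ S.filter (fun x => x ∈ A), (g x - m)^2 :=
              Finset.card_nsmul_le_sum _ _ _ h1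
        _ ≤ ∑ x ∈ S, (g x - m)^2 :=
              Finset.sum_le_sum_of_subset_of_nonneg (Finset.filter_subset _ _)
                (fun i _ _ => sq_nonneg _)
    have h2 : a * q^2 / S.card ≤ q^2 * δ :=
      le_trans (by gcongr) hvc
    rw [havg]
    have h3 : (a / S.card) * q^2 ≤ δ * q^2 := by
      rw [div_mul_eq_mul_div]; linarith
    exact le_of_mul_le_mul_right h3 (pow_pos hqpos 2)
  · right
    set b : ℝ := ((S.filter (fun x => x ∉ A)).card : ℝ) with hb
    have hsum : b * q^2 ≤ ∑ x ∈ S, (g x - m)^2 := by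
      have h1 : ∀ x ∈ S.filter (fun x => x ∉ A), q^2 ≤ (g x - m)^2 := by
        intro x hx
        have hxA : x ∉ A := (Finset.mem_filter.mp hx).2
        have h := hgna x hxA
        have hle : q ≤ m - g x := by rw [hq]; push_neg at hmc; linarith
        have := pow_le_pow_left₀ hqpos.le hle 2
        calc q^2 ≤ (m - g x)^2 := this
          _ = (g x - m)^2 := by ring
      calc b * q^2 = (S.filter (fun x => x ∉ A)).card • q^2 := by
              rw [nsmul_eq_mul, hb]
        _ ≤ ∑ x ∈ S.filter (fun x => x ∉ A), (g x - m)^2 :=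
              Finset.card_nsmul_le_sum _ _ _ h1
        _ ≤ ∑ x ∈ S, (g x - m)^2 :=
              Finset.sum_le_sum_of_subset_of_nonneg (Finset.filter_subset _ _)
                (fun i _ _ => sq_nonneg _)
    have h2 : b * q^2 / S.card ≤ q^2 * δ :=
      le_trans (by gcongr) hvc
    have h3 : (b / S.card) * q^2 ≤ δ * q^2 := by
      rw [div_mul_eq_mul_div]; linarith
    have h4 : b / S.card ≤ δ := le_of_mul_le_mul_right h3 (pow_pos hqpos 2)
    have hab : a + b = (S.card : ℝ) := by
      rw [ha, hb]
      rw [← Nat.cast_add]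
      norm_cast
      exact Finset.card_filter_add_card_filter_not _
    rw [havg, ge_iff_le, le_div_iff₀ hN]
    have h5 : b ≤ δ * S.card := (div_le_iff₀ hN).mp h4
    nlinarith
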